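/- arXiv:2209.13429 — 2 statements merged into one kernel-verified Lean document; each statement's English description precedes it below -/
import Mathlib

section
/- Fix d ≥ 3, i ∈ [d], j ∈ [d]. With notation as below, (1/C(d-1,j-1)) · Σ_{S ⊆ [d]\{i}, |S|=j-1} e_S e_{S^c}ᵀ = ((j-1)/(d-1))·(𝟙-e_i)𝟙ᵀ − ((j-1)(j-2)/((d-1)(d-2)))·(𝟙-e_i)(𝟙-e_i)ᵀ − ((j-1)(d-j)/((d-1)(d-2)))·(I_d − e_i e_iᵀ). -/
open Finset Matrix

/-!
Entry `(k, l)` of `∑ S, e_S e_{Sᶜ}ᵀ` counts the `(j-1)`-subsets `S` of `[d] \ {i}` with `k ∈ S` and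
`l ∉ S`. There are none if `k = i` or `k = l`, `C(d-2, j-2)` if `l = i`, and `C(d-3, j-2)`
otherwise. Divided by `C(d-1, j-1)` these are `(j-1)/(d-1)` and `(j-1)(d-j)/((d-1)(d-2))`, which
are exactly the entries of the right-hand side.
-/

def indVec (d : ℕ) (S : Finset (Fin d)) : Fin d → ℝ := fun k => if k ∈ S then 1 else 0

namespace Finset

variable {α : Type*} [DecidableEq α]

-- Multiplied out, so that it also holds for `m = 0`.
theorem card_filter_mem_powersetCard_mul_card {A : Finset α} {k : α} (hk : k ∈ A) (m : ℕ) :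
    #{S ∈ A.powersetCard m | k ∈ S} * #A = m * (#A).choose m := by
  cases m with
  | zero => simp
  | succ m =>
    obtain ⟨N, hN⟩ : ∃ N, #A = N + 1 := Nat.exists_eq_succ_of_ne_zero (card_ne_zero_of_mem hk)
    have := card_filter_powersetCard_subset {k} A (m + 1) (singleton_subset_iff.2 hk) (by simp)
    simp only [singleton_subset_iff, card_singleton, add_tsub_cancel_right, hN] at this
    rw [this, hN, mul_comm, Nat.add_one_mul_choose_eq, mul_comm]

theorem filter_notMem_powersetCard (A : Finset α) (l : α) (m : ℕ) :
    {S ∈ A.powersetCard m | l ∉ S} = (A.erase l).powersetCard m := by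
  ext S
  simp only [mem_filter, mem_powersetCard, subset_erase]
  tauto

theorem card_filter_mem_and_notMem_powersetCard_mul_card {A : Finset α} {k l : α} (hk : k ∈ A)
    (hkl : k ≠ l) (m : ℕ) :
    #{S ∈ A.powersetCard m | k ∈ S ∧ l ∉ S} * #(A.erase l) = m * (#(A.erase l)).choose m := by
  rw [← card_filter_mem_powersetCard_mul_card (mem_erase.2 ⟨hkl, hk⟩),
    ← filter_notMem_powersetCard, filter_filter]
  simp only [and_comm]

end Finset

theorem sum_vecMulVec_indVec_compl_apply {d : ℕ} (P : Finset (Finset (Fin d))) (k l : Fin d) :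
    (∑ S ∈ P, vecMulVec (indVec d S) (indVec d Sᶜ)) k l = #{S ∈ P | k ∈ S ∧ l ∉ S} := by
  simp only [Matrix.sum_apply, vecMulVec_apply, indVec, mem_compl, ite_mul, one_mul, zero_mul,
    ← ite_and, sum_boole]

theorem card_filter_mem_and_notMem_powersetCard_sdiff_singleton_div_choose {n m : ℕ}
    (hm : m ≤ n + 2) (i k l : Fin (n + 3)) :
    (#{S ∈ (univ \ {i}).powersetCard m | k ∈ S ∧ l ∉ S} : ℝ) / (n + 2).choose m =
      if k = i ∨ k = l then 0
      else if l = i then (m : ℝ) / (n + 2) else (m : ℝ) * (n + 2 - m) / ((n + 2) * (n + 1)) := by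
  set A : Finset (Fin (n + 3)) := univ \ {i}
  have hA : #A = n + 2 := by simp [A, card_sdiff]
  have hC : ((n + 2).choose m : ℝ) ≠ 0 := by exact_mod_cast (Nat.choose_pos hm).ne'
  split_ifs with hkil hli
  · have : {S ∈ A.powersetCard m | k ∈ S ∧ l ∉ S} = ∅ := by
      rw [filter_eq_empty_iff]
      rintro S hS ⟨hkS, hlS⟩
      rcases hkil with rfl | rfl
      · simpa [A] using (mem_powersetCard.1 hS).1 hkS
      · exact hlS hkS
    simp [this]
  all_goals
    push Not at hkil
    have key := card_filter_mem_and_notMem_powersetCard_mul_card (A := A)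
      (by simp [A, hkil.1]) hkil.2 m
  · rw [erase_eq_of_notMem (by simp [A, hli]), hA] at key
    rw [div_eq_div_iff hC (by positivity)]
    exact_mod_cast key
  · rw [card_erase_of_mem (by simp [A, hli]), hA, show n + 2 - 1 = n + 1 by omega] at key
    have key' : (#{S ∈ A.powersetCard m | k ∈ S ∧ l ∉ S} : ℝ) * (n + 1) =
        m * (n + 1).choose m := by exact_mod_cast key
    have pascal : (n + 1).choose m * (n + 2) = (n + 2).choose m * (n + 2 - m) :=
      Nat.choose_mul_succ_eq (n + 1) m
    have pascal' : ((n + 1).choose m : ℝ) * (n + 2) = (n + 2).choose m * (n + 2 - m) := by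
      have := congrArg (Nat.cast : ℕ → ℝ) pascal
      push_cast [Nat.cast_sub hm] at this
      exact this
    rw [div_eq_div_iff hC (by positivity)]
    linear_combination (n + 2 : ℝ) * key' + m * pascal'

/-- (1/C(d-1,j-1)) Σ_{S ⊆ [d]\{i}, |S|=j-1} e_S e_{S^c}ᵀ
  = ((j-1)/(d-1))·(𝟙-e_i)𝟙ᵀ − ((j-1)(j-2)/((d-1)(d-2)))·(𝟙-e_i)(𝟙-e_i)ᵀ
    − ((j-1)(d-j)/((d-1)(d-2)))·(I_d − e_i e_iᵀ). -/
theorem stmt_7 (d : ℕ) (hd : 3 ≤ d) (i : Fin d) (j : ℕ) (hj1 : 1 ≤ j) (hjd : j ≤ d) :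
    (1 / ((d - 1).choose (j - 1) : ℝ)) •
        ∑ S ∈ (Finset.univ \ {i}).powersetCard (j - 1), vecMulVec (indVec d S) (indVec d Sᶜ)
      = (((j : ℝ) - 1) / ((d : ℝ) - 1)) •
          vecMulVec ((fun _ => 1) - indVec d {i}) (fun _ => 1)
        - ((((j : ℝ) - 1) * ((j : ℝ) - 2)) / (((d : ℝ) - 1) * ((d : ℝ) - 2))) •
          vecMulVec ((fun _ => 1) - indVec d {i}) ((fun _ => 1) - indVec d {i})
        - ((((j : ℝ) - 1) * ((d : ℝ) - (j : ℝ))) / (((d : ℝ) - 1) * ((d : ℝ) - 2))) •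
          ((1 : Matrix (Fin d) (Fin d) ℝ) - vecMulVec (indVec d {i}) (indVec d {i})) := by
  obtain ⟨n, rfl⟩ := Nat.exists_eq_add_of_le' hd
  obtain ⟨m, rfl⟩ := Nat.exists_eq_add_of_le' hj1
  have hd1 : ((n + 3 : ℕ) : ℝ) - 1 = n + 2 := by push_cast; ring
  have hd2 : ((n + 3 : ℕ) : ℝ) - 2 = n + 1 := by push_cast; ring
  rw [hd1, hd2]
  ext k l
  rw [Matrix.smul_apply, sum_vecMulVec_indVec_compl_apply, smul_eq_mul, one_div_mul_eq_div,
    show n + 3 - 1 = n + 2 by omega, Nat.add_sub_cancel,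
    card_filter_mem_and_notMem_powersetCard_sdiff_singleton_div_choose (by omega)]
  simp only [Matrix.sub_apply, Matrix.smul_apply, vecMulVec_apply, one_apply, indVec,
    Pi.sub_apply, mem_singleton, smul_eq_mul]
  push_cast
  split_ifs <;> subst_vars <;> simp_all <;> field_simp <;> ring
end

section
/- (Uniqueness of semivalues with matching sums) Let φ₁, φ₂ be attribution maps of the form φ_m(i; v) = Σ_{j=1}^d w_j^{(m)} Δ_j(i; v) (m=1,2) with weight vectors w^{(1)}, w^{(2)}. If Σ_{i=1}^d φ₁(i; v) = Σ_{i=1}^d φ₂(i; v) for every coalition function v : 2^{[d]} → ℝ with v(∅)=0, then w^{(1)} = w^{(2)}, and hence φ₁ = φ₂. -/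
/-!
The threshold game `v_k(S) = 1[k < |S|]` has marginal contribution `1` exactly when the
coalition joined has size `k`, so `Δ_j(i; v_k) = δ_{jk}` and every player receives `w_k`.
The total attribution of `v_k` is therefore `d • w_k`, which recovers the weight vector from
the efficiency sums alone.
-/

open Finset

/-- Average marginal contribution of feature i over coalitions of size j (not containing i). -/
noncomputable def margContrib (d : ℕ) (v : Finset (Fin d) → ℝ) (j : ℕ) (i : Fin d) : ℝ :=
  (1 / ((d - 1).choose j : ℝ)) *
    ∑ S ∈ (Finset.univ \ {i}).powersetCard j, (v (insert i S) - v S)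

/-- Weighted attribution with weight vector w. -/
noncomputable def phiW (d : ℕ) (w : Fin d → ℝ) (v : Finset (Fin d) → ℝ) (i : Fin d) : ℝ :=
  ∑ j : Fin d, w j * margContrib d v j.val i

def thresholdGame {α : Type*} (k : ℕ) (S : Finset α) : ℝ :=
  if k < #S then 1 else 0

lemma thresholdGame_empty {α : Type*} (k : ℕ) : thresholdGame k (∅ : Finset α) = 0 := by
  simp [thresholdGame]

lemma thresholdGame_insert_sub {α : Type*} [DecidableEq α] (k : ℕ) {i : α} {S : Finset α}
    (hi : i ∉ S) :
    thresholdGame k (insert i S) - thresholdGame k S = if #S = k then 1 else 0 := by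
  rw [thresholdGame, thresholdGame, card_insert_of_notMem hi]
  split_ifs <;> first | omega | norm_num

lemma margContrib_thresholdGame {d j : ℕ} (hj : j < d) (k : ℕ) (i : Fin d) :
    margContrib d (thresholdGame k) j i = if j = k then 1 else 0 := by
  have hterm : ∀ S ∈ (univ \ {i}).powersetCard j,
      thresholdGame k (insert i S) - thresholdGame k S = if j = k then 1 else 0 := by
    intro S hS
    obtain ⟨hSi, hcard⟩ := mem_powersetCard.mp hS
    rw [thresholdGame_insert_sub k fun hiS => by simpa using hSi hiS, hcard]
  have hchoose : ((d - 1).choose j : ℝ) ≠ 0 := by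
    exact_mod_cast (Nat.choose_pos (by omega)).ne'
  rw [margContrib, sum_congr rfl hterm, sum_const, card_powersetCard, card_sdiff_of_subset
    (subset_univ _), card_univ, Fintype.card_fin, card_singleton, nsmul_eq_mul]
  field_simp

lemma phiW_thresholdGame {d : ℕ} (w : Fin d → ℝ) (k i : Fin d) :
    phiW d w (thresholdGame k) i = w k := by
  simp only [phiW, margContrib_thresholdGame, Fin.is_lt, Fin.val_inj, mul_ite, mul_one, mul_zero,
    sum_ite_eq', mem_univ, if_true]

theorem stmt_13_general (d : ℕ) (w₁ w₂ : Fin d → ℝ)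
    (h : ∀ v : Finset (Fin d) → ℝ, v ∅ = 0 →
      ∑ i : Fin d, phiW d w₁ v i = ∑ i : Fin d, phiW d w₂ v i) :
    w₁ = w₂ ∧ ∀ (v : Finset (Fin d) → ℝ) (i : Fin d), phiW d w₁ v i = phiW d w₂ v i := by
  have hw : w₁ = w₂ := by
    funext k
    have hk := h (thresholdGame k) (thresholdGame_empty k)
    simp only [phiW_thresholdGame, sum_const, card_univ, Fintype.card_fin, nsmul_eq_mul] at hk
    exact mul_left_cancel₀ (Nat.cast_ne_zero.mpr k.pos.ne') hk
  exact ⟨hw, fun v i => by rw [hw]⟩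

/-- Uniqueness of semivalues with matching sums: if two weighted attributions have the same
total sum for every coalition function vanishing at ∅, their weights are equal, and hence
the attributions coincide. -/
theorem stmt_13 (d : ℕ) (hd : 1 ≤ d) (w₁ w₂ : Fin d → ℝ)
    (h : ∀ v : Finset (Fin d) → ℝ, v ∅ = 0 →
      ∑ i : Fin d, phiW d w₁ v i = ∑ i : Fin d, phiW d w₂ v i) :
    w₁ = w₂ ∧ ∀ (v : Finset (Fin d) → ℝ) (i : Fin d), phiW d w₁ v i = phiW d w₂ v i :=
  stmt_13_general d w₁ w₂ h
end
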